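/- Let n ≥ 2 and z ∈ ℂ, and let t̄^1, …, t̄^{n−1} be finite families of complex numbers such that t^s_m ∉ {z_s, z_{s+1}} for all 1 ≤ s ≤ n−1 and all m. Define the families w̄^0_I = (z, z+c/2), w̄^0_II = ∅, and, for 1 ≤ s ≤ n−1, w̄^s_I = (z_s) and w̄^s_II = t̄^s ∪ (z). Then (1/h(w̄^{n−1}_I, z_{n−1})) · ∏_{s=1}^{n−1} [ h(w̄^s_II, w̄^{s−1}_I) · g(w̄^s_I, w̄^s_II) ] / [ h(w̄^s_II, w̄^s_I) · g(w̄^s_I, w̄^{s−1}_II) ] = −(1/κ) · h(t̄^1, z) · g(z_n, t̄^{n−1}). -/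

import Mathlib

noncomputable section

/-- `g(u,v) = c/(u − v)`. -/
def gf (c u v : ℂ) : ℂ := c / (u - v)

/-- `h(u,v) = (u − v + c)/c`. -/
def hf (c u v : ℂ) : ℂ := (u - v + c) / c

/-- The shifted point `z_k = z − c(k − 1/2)` (with `k` a complex parameter). -/
def zpt (c z k : ℂ) : ℂ := z - c * (k - 1 / 2)

/-- A two-variable function evaluated on two finite families means the product
over all pairs of elements, one from each family; empty products equal 1. -/
def pairProd (x : ℂ → ℂ → ℂ) (A B : List ℂ) : ℂ :=
  (A.map fun a => (B.map (x a)).prod).prod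

/-- The family `w̄^k_I`: `(z, z + c/2)` for `k = 0` and `(z_k)` for `k ≥ 1`. -/
def wI (c z : ℂ) (k : ℕ) : List ℂ :=
  if k = 0 then [z, z + c / 2] else [zpt c z (k : ℂ)]

/-- The family `w̄^k_II`: empty for `k = 0` and `t̄^k ∪ (z)` for `k ≥ 1`. -/
def wII (c z : ℂ) (t : ℕ → ℕ → ℂ) (r : ℕ → ℕ) (k : ℕ) : List ℂ :=
  if k = 0 then [] else z :: List.ofFn fun m : Fin (r k) => t k m

/-! Since `z_{s-1} = z_s + c` and `h(u, w + c) · g(w, u) = -1` for `u ≠ w`, the `t̄^s`-parts of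
the `s`-th factor collapse: `h(t̄^s, z_{s-1}) g(z_s, t̄^s) / h(t̄^s, z_s) = g(z_{s+1}, t̄^s)`.
The point `z` only contributes the scalars `h(z, z_k) = k + 1/2` and `g(z_k, z) = -1/(k - 1/2)`.
Hence the first factor is `-(2/3) h(t̄^1, z) g(z_2, t̄^1)`, the `s`-th factor for `s ≥ 2` is
`(s - 1/2)/(s + 1/2) · g(z_{s+1}, t̄^s) / g(z_s, t̄^{s-1})`, and the product telescopes. -/

lemma pairProd_singleton (x : ℂ → ℂ → ℂ) (a b : ℂ) : pairProd x [a] [b] = x a b := by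
  simp [pairProd]

lemma pairProd_nil_right (x : ℂ → ℂ → ℂ) (A : List ℂ) : pairProd x A [] = 1 := by
  simp [pairProd]

lemma pairProd_append_left (x : ℂ → ℂ → ℂ) (A A' B : List ℂ) :
    pairProd x (A ++ A') B = pairProd x A B * pairProd x A' B := by
  simp [pairProd]

lemma pairProd_append_right (x : ℂ → ℂ → ℂ) (A B B' : List ℂ) :
    pairProd x A (B ++ B') = pairProd x A B * pairProd x A B' := by
  simp [pairProd, List.prod_map_mul]

lemma hf_self {c : ℂ} (hc : c ≠ 0) (u : ℂ) : hf c u u = 1 := by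
  simp [hf, hc]

lemma hf_add_mul_gf {c : ℂ} (hc : c ≠ 0) {u w : ℂ} (h : u ≠ w) :
    hf c u (w + c) * gf c w u = -1 := by
  have : w - u ≠ 0 := sub_ne_zero.mpr h.symm
  rw [hf, gf]
  field_simp
  ring

lemma pairProd_hf_mul_pairProd_gf {c : ℂ} (hc : c ≠ 0) {w : ℂ} {T : List ℂ}
    (hT : ∀ u ∈ T, u ≠ w) :
    pairProd (hf c) T [w + c] * pairProd (gf c) [w] T = (-1) ^ T.length := by
  induction T with
  | nil => simp [pairProd]
  | cons u T ih =>
    rw [← List.singleton_append, pairProd_append_left, pairProd_append_right,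
      pairProd_singleton, pairProd_singleton, mul_mul_mul_comm,
      hf_add_mul_gf hc (hT u (by simp)), ih fun v hv => hT v (by simp [hv])]
    simp [pow_succ, mul_comm]

lemma pairProd_gf_ne_zero {c : ℂ} (hc : c ≠ 0) {w : ℂ} {T : List ℂ}
    (hT : ∀ u ∈ T, u ≠ w) :
    pairProd (gf c) [w] T ≠ 0 :=
  right_ne_zero_of_mul <| by
    rw [pairProd_hf_mul_pairProd_gf hc hT]
    exact pow_ne_zero _ (by norm_num)

lemma zpt_sub_one (c z k : ℂ) : zpt c z (k - 1) = zpt c z k + c := by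
  unfold zpt; ring

lemma hf_zpt {c : ℂ} (hc : c ≠ 0) (z k : ℂ) : hf c z (zpt c z k) = k + 1 / 2 := by
  rw [hf, zpt, div_eq_iff hc]; ring

lemma gf_zpt {c : ℂ} (hc : c ≠ 0) (z k : ℂ) : gf c (zpt c z k) z = -(k - 1 / 2)⁻¹ := by
  rw [gf, zpt, show z - c * (k - 1 / 2) - z = -(c * (k - 1 / 2)) by ring, div_neg,
    div_mul_cancel_left₀ hc]

lemma pairProd_zpt_shift {c : ℂ} (hc : c ≠ 0) {z k : ℂ} {T : List ℂ}
    (hT : ∀ u ∈ T, u ≠ zpt c z k ∧ u ≠ zpt c z (k + 1)) :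
    pairProd (hf c) T [zpt c z (k - 1)] * pairProd (gf c) [zpt c z k] T /
        pairProd (hf c) T [zpt c z k] =
      pairProd (gf c) [zpt c z (k + 1)] T := by
  have h₁ := pairProd_hf_mul_pairProd_gf hc fun u hu => (hT u hu).1
  have h₂ := pairProd_hf_mul_pairProd_gf hc fun u hu => (hT u hu).2
  rw [← zpt_sub_one] at h₁
  rw [← zpt_sub_one, add_sub_cancel_right] at h₂
  have hH : pairProd (hf c) T [zpt c z k] ≠ 0 :=
    left_ne_zero_of_mul (h₂ ▸ pow_ne_zero _ (by norm_num))
  rw [h₁, div_eq_iff hH, ← h₂, mul_comm]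

def tFam (t : ℕ → ℕ → ℂ) (r : ℕ → ℕ) (s : ℕ) : List ℂ :=
  List.ofFn fun m : Fin (r s) => t s m

lemma forall_mem_tFam {t : ℕ → ℕ → ℂ} {r : ℕ → ℕ} {s : ℕ} {P : ℂ → Prop} :
    (∀ u ∈ tFam t r s, P u) ↔ ∀ m < r s, P (t s m) := by
  simp [tFam, Fin.forall_iff]

lemma wI_zero (c z : ℂ) : wI c z 0 = [z] ++ [zpt c z 0] := by
  rw [wI, if_pos rfl, zpt]
  congr 2
  ring

lemma wI_of_ne_zero (c z : ℂ) {s : ℕ} (hs : s ≠ 0) : wI c z s = [zpt c z s] :=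
  if_neg hs

lemma wII_of_ne_zero (c z : ℂ) (t : ℕ → ℕ → ℂ) (r : ℕ → ℕ) {s : ℕ} (hs : s ≠ 0) :
    wII c z t r s = [z] ++ tFam t r s :=
  if_neg hs

lemma natCast_add_half_ne_zero (N : ℕ) : (N : ℂ) + 1 / 2 ≠ 0 := by
  intro h
  have h' := congrArg Complex.re h
  simp at h'
  linarith [(Nat.cast_nonneg N : (0 : ℝ) ≤ N)]

def stepFactor (c z : ℂ) (t : ℕ → ℕ → ℂ) (r : ℕ → ℕ) (s : ℕ) : ℂ :=
  pairProd (hf c) (wII c z t r s) (wI c z (s - 1)) *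
      pairProd (gf c) (wI c z s) (wII c z t r s) /
    (pairProd (hf c) (wII c z t r s) (wI c z s) *
      pairProd (gf c) (wI c z s) (wII c z t r (s - 1)))

lemma stepFactor_one {c : ℂ} (hc : c ≠ 0) (z : ℂ) (t : ℕ → ℕ → ℂ) (r : ℕ → ℕ)
    (hT : ∀ u ∈ tFam t r 1, u ≠ zpt c z 1 ∧ u ≠ zpt c z 2) :
    stepFactor c z t r 1 =
      -(3 / 2)⁻¹ * pairProd (hf c) (tFam t r 1) [z] *
        pairProd (gf c) [zpt c z 2] (tFam t r 1) := by
  have hshift := pairProd_zpt_shift hc (k := 1) (by norm_num; exact hT)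
  norm_num at hshift
  rw [stepFactor, Nat.sub_self, wI_zero, wI_of_ne_zero c z one_ne_zero,
    wII_of_ne_zero c z t r one_ne_zero, wII, if_pos rfl]
  simp only [pairProd_append_left, pairProd_append_right, pairProd_singleton, pairProd_nil_right,
    hf_self hc, hf_zpt hc, gf_zpt hc, Nat.cast_one, ← hshift]
  ring

lemma stepFactor_of_two_le {c : ℂ} (hc : c ≠ 0) (z : ℂ) (t : ℕ → ℕ → ℂ) (r : ℕ → ℕ) {s : ℕ}
    (hs : 2 ≤ s) (hT : ∀ u ∈ tFam t r s, u ≠ zpt c z s ∧ u ≠ zpt c z (s + 1)) :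
    stepFactor c z t r s = ((s : ℂ) - 1 / 2) / ((s : ℂ) + 1 / 2) *
      pairProd (gf c) [zpt c z (s + 1)] (tFam t r s) /
        pairProd (gf c) [zpt c z s] (tFam t r (s - 1)) := by
  have hs' : (s : ℂ) - 1 / 2 ≠ 0 := by
    convert natCast_add_half_ne_zero (s - 1) using 1
    push_cast [Nat.cast_sub (by omega : 1 ≤ s)]
    ring
  rw [stepFactor, wI_of_ne_zero c z (by omega : s - 1 ≠ 0),
    wI_of_ne_zero c z (by omega : s ≠ 0),
    wII_of_ne_zero c z t r (by omega : s ≠ 0), wII_of_ne_zero c z t r (by omega : s - 1 ≠ 0),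
    Nat.cast_sub (by omega : 1 ≤ s), Nat.cast_one, ← pairProd_zpt_shift hc hT]
  simp only [pairProd_append_left, pairProd_append_right, pairProd_singleton,
    hf_zpt hc, gf_zpt hc, show (s : ℂ) - 1 + 1 / 2 = s - 1 / 2 by ring]
  field_simp

lemma prod_stepFactor {c : ℂ} (hc : c ≠ 0) (z : ℂ) (t : ℕ → ℕ → ℂ) (r : ℕ → ℕ) {N : ℕ}
    (hN : 1 ≤ N)
    (hT : ∀ s, 1 ≤ s → s ≤ N → ∀ u ∈ tFam t r s, u ≠ zpt c z s ∧ u ≠ zpt c z (s + 1)) :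
    ∏ s ∈ Finset.Icc 1 N, stepFactor c z t r s =
      -((N : ℂ) + 1 / 2)⁻¹ * pairProd (hf c) (tFam t r 1) [z] *
        pairProd (gf c) [zpt c z (N + 1)] (tFam t r N) := by
  induction N, hN using Nat.le_induction with
  | base =>
    have hT₁ := hT 1 le_rfl le_rfl
    norm_num at hT₁
    rw [Finset.Icc_self, Finset.prod_singleton, stepFactor_one hc z t r hT₁]
    norm_num
  | succ N hN ih =>
    rw [Finset.prod_Icc_succ_top (by omega), ih fun s h₁ h₂ => hT s h₁ (by omega),
      stepFactor_of_two_le hc z t r (by omega) (hT (N + 1) (by omega) le_rfl)]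
    have hG := pairProd_gf_ne_zero hc fun u hu => (hT N hN (by omega) u hu).2
    have h₁ := natCast_add_half_ne_zero N
    have h₂ := natCast_add_half_ne_zero (N + 1)
    push_cast at h₂ ⊢
    rw [show (N : ℂ) + 1 - 1 / 2 = N + 1 / 2 by ring]
    generalize (N : ℂ) + 1 / 2 = a at h₁ ⊢
    generalize (N : ℂ) + 1 + 1 / 2 = b at h₂ ⊢
    field_simp

/-- for `n ≥ 2` and Bethe parameters with
`t^s_m ∉ {z_s, z_{s+1}}` for `1 ≤ s ≤ n−1`, the product identity
`(1/h(w̄^{n−1}_I, z_{n−1})) ∏_{s=1}^{n−1}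
   [h(w̄^s_II, w̄^{s−1}_I) g(w̄^s_I, w̄^s_II)] / [h(w̄^s_II, w̄^s_I) g(w̄^s_I, w̄^{s−1}_II)]
 = −(1/κ) h(t̄^1, z) g(z_n, t̄^{n−1})` holds, where `κ = n − 1/2`. -/
theorem statement13 (n : ℕ) (hn : 2 ≤ n) (c : ℂ) (hc : c ≠ 0) (z : ℂ)
    (t : ℕ → ℕ → ℂ) (r : ℕ → ℕ)
    (ht : ∀ s : ℕ, 1 ≤ s → s ≤ n - 1 → ∀ m < r s,
      t s m ≠ zpt c z (s : ℂ) ∧ t s m ≠ zpt c z ((s : ℂ) + 1)) :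
    (pairProd (hf c) (wI c z (n - 1)) [zpt c z ((n - 1 : ℕ) : ℂ)])⁻¹ *
        ∏ s ∈ Finset.Icc 1 (n - 1),
          pairProd (hf c) (wII c z t r s) (wI c z (s - 1)) *
              pairProd (gf c) (wI c z s) (wII c z t r s) /
            (pairProd (hf c) (wII c z t r s) (wI c z s) *
              pairProd (gf c) (wI c z s) (wII c z t r (s - 1))) =
      -((n : ℂ) - 1 / 2)⁻¹ *
          pairProd (hf c) (List.ofFn fun m : Fin (r 1) => t 1 m) [z] *
          pairProd (gf c) [zpt c z (n : ℂ)] (List.ofFn fun m : Fin (r (n - 1)) => t (n - 1) m) := by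
  have hn₁ : 1 ≤ n - 1 := by omega
  have hprefactor : pairProd (hf c) (wI c z (n - 1)) [zpt c z ((n - 1 : ℕ) : ℂ)] = 1 := by
    rw [wI_of_ne_zero c z (by omega), pairProd_singleton, hf_self hc]
  have hcast : ((n - 1 : ℕ) : ℂ) = n - 1 := by
    rw [Nat.cast_sub (by omega), Nat.cast_one]
  rw [hprefactor, inv_one, one_mul]
  refine (prod_stepFactor hc z t r hn₁ fun s h₁ h₂ => forall_mem_tFam.mpr (ht s h₁ h₂)).trans ?_
  rw [hcast, sub_add_cancel, show (n : ℂ) - 1 + 1 / 2 = n - 1 / 2 by ring]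
  rfl

end
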